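/- Let A, B be strings of lengths m and n, σ a character, and let K' be the all scores matrix of σA (σ prepended to A) and B. Then for all 0 ≤ i ≤ j ≤ n: K'[i,j] = K[i,j] + 1 if and only if k = nextmatch(i,σ,B) < ∞ and K[i,j] = K[k,j]. -/

import Mathlib

variable {α : Type*}

/-- LCS of two lists: the maximum length of a common sublist. -/
noncomputable def LCS (X Y : List α) : ℕ :=
  sSup {k | ∃ Z : List α, Z.length = k ∧ Z.Sublist X ∧ Z.Sublist Y}

/-- `substr S i j` is S[i..j]: the characters of S at (1-based) positions i+1,…,j. -/
def substr (S : List α) (i j : ℕ) : List α := (S.take j).drop i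

/-- The density matrix D□ of a matrix D. -/
def density (D : ℕ → ℕ → ℤ) (i j : ℕ) : ℤ :=
  D i j + D (i - 1) (j - 1) - D (i - 1) j - D i (j - 1)

/-- The all scores matrix K of A and B: K[i,j] = LCS(B[i..j], A) if i ≤ j, else j - i. -/
noncomputable def Kmat (A B : List α) (i j : ℕ) : ℤ :=
  if i ≤ j then (LCS (substr B i j) A : ℤ) else (j : ℤ) - (i : ℤ)

/-- The all scores matrix P of A and B: P[i,j] = LCS(B[i..n], A[0..j]). -/
noncomputable def Pmat (A B : List α) (i j : ℕ) : ℤ :=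
  (LCS (substr B i B.length) (substr A 0 j) : ℤ)

/-- nextmatch(i,σ,B): minimum (1-based) position i' with i < i' ≤ |B| and B[i'] = σ; ⊤ (∞) if none. -/
noncomputable def nextmatch (i : ℕ) (σ : α) (B : List α) : ℕ∞ :=
  sInf {k : ℕ∞ | ∃ k' : ℕ, k = (k' : ℕ∞) ∧ i < k' ∧ k' ≤ B.length ∧ B[k' - 1]? = some σ}

/-- prevmatch(j,σ,B): maximum (1-based) position i' with 1 ≤ i' ≤ j and B[i'] = σ; ⊥ (−∞) if none. -/
noncomputable def prevmatch (j : ℕ) (σ : α) (B : List α) : WithBot ℕ :=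
  sSup {k : WithBot ℕ | ∃ k' : ℕ, k = (k' : WithBot ℕ) ∧ 1 ≤ k' ∧ k' ≤ j ∧ B[k' - 1]? = some σ}

/-! Write `X = B[i..j]`. If `σ` occurs in `X`, split it at the first occurrence, `X = X₁ σ X₂`
with `σ ∉ X₁`; then `X₂ = B[k..j]` for `k = nextmatch(i,σ,B)`. A common sublist of `X` and `σA`
either avoids the leading `σ` of `σA` or can be taken to match it with this first `σ` of `X`,
so `LCS(X, σA) = max(LCS(X, A), LCS(X₂, A) + 1)`. As `X₂` is a suffix of `X`, the maximum
equals `LCS(X, A) + 1` exactly when `LCS(X₂, A) = LCS(X, A)`. If `σ ∉ X` then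
`LCS(X, σA) = LCS(X, A)`, while `nextmatch` is `∞` or lies beyond `j`, where `K[k,j] < 0`. -/

section LCS

variable {X Y Z X' Y' : List α}

theorem bddAbove_LCS_set (X Y : List α) :
    BddAbove {k | ∃ Z : List α, Z.length = k ∧ Z.Sublist X ∧ Z.Sublist Y} :=
  ⟨X.length, fun _ ⟨_, hZ, hX, _⟩ => hZ ▸ hX.length_le⟩

theorem le_LCS (hX : Z.Sublist X) (hY : Z.Sublist Y) : Z.length ≤ LCS X Y :=
  le_csSup (bddAbove_LCS_set X Y) ⟨Z, rfl, hX, hY⟩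

theorem exists_sublist_length_eq_LCS (X Y : List α) :
    ∃ Z : List α, Z.length = LCS X Y ∧ Z.Sublist X ∧ Z.Sublist Y :=
  Nat.sSup_mem ⟨0, by exact ⟨[], rfl, List.nil_sublist X, List.nil_sublist Y⟩⟩
    (bddAbove_LCS_set X Y)

theorem LCS_mono (hX : X.Sublist X') (hY : Y.Sublist Y') : LCS X Y ≤ LCS X' Y' := by
  obtain ⟨Z, hZ, hZX, hZY⟩ := exists_sublist_length_eq_LCS X Y
  exact hZ ▸ le_LCS (hZX.trans hX) (hZY.trans hY)

theorem LCS_cons_right_of_not_mem {a : α} (ha : a ∉ X) : LCS X (a :: Y) = LCS X Y := by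
  refine le_antisymm ?_ (LCS_mono (List.Sublist.refl X) (List.sublist_cons_self a Y))
  obtain ⟨Z, hZ, hZX, hZY⟩ := exists_sublist_length_eq_LCS X (a :: Y)
  rcases List.sublist_cons_iff.mp hZY with hZY | ⟨Z', rfl, -⟩
  · exact hZ ▸ le_LCS hZX hZY
  · exact absurd (hZX.subset List.mem_cons_self) ha

theorem LCS_append_cons_cons_right {X₁ X₂ : List α} {a : α} (ha : a ∉ X₁) :
    LCS (X₁ ++ a :: X₂) (a :: Y) = max (LCS (X₁ ++ a :: X₂) Y) (LCS X₂ Y + 1) := by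
  refine le_antisymm ?_ (max_le (LCS_mono (List.Sublist.refl _) (List.sublist_cons_self a Y)) ?_)
  · obtain ⟨Z, hZ, hZX, hZY⟩ := exists_sublist_length_eq_LCS (X₁ ++ a :: X₂) (a :: Y)
    rcases List.sublist_cons_iff.mp hZY with hZY | ⟨Z', rfl, hZ'Y⟩
    · exact hZ ▸ le_max_of_le_left (le_LCS hZX hZY)
    · -- the leading `a` of `Z` cannot be matched inside `X₁`
      obtain ⟨_ | ⟨b, l₁⟩, l₂, hsplit, hl₁, hl₂⟩ := List.sublist_append_iff.mp hZX
      · rw [List.nil_append] at hsplit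
        subst hsplit
        rw [← hZ, List.length_cons]
        exact le_max_of_le_right (Nat.succ_le_succ (le_LCS (List.cons_sublist_cons.mp hl₂) hZ'Y))
      · obtain ⟨rfl, -⟩ := List.cons.inj hsplit
        exact absurd (hl₁.subset List.mem_cons_self) ha
  · obtain ⟨Z, hZ, hZX, hZY⟩ := exists_sublist_length_eq_LCS X₂ Y
    have := le_LCS ((hZX.cons_cons a).trans (List.sublist_append_right X₁ _)) (hZY.cons_cons a)
    rwa [List.length_cons, hZ] at this

end LCS

section Substring

variable {S : List α} {i j k : ℕ} {a : α}

theorem mem_substr_iff : a ∈ substr S i j ↔ ∃ k, i < k ∧ k ≤ j ∧ S[k - 1]? = some a := by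
  simp only [substr, List.mem_iff_getElem?, List.getElem?_drop, List.getElem?_take]
  constructor
  · rintro ⟨t, ht⟩
    split_ifs at ht with h
    exact ⟨i + t + 1, by omega, by omega, ht⟩
  · rintro ⟨k, hik, hkj, hk⟩
    refine ⟨k - 1 - i, ?_⟩
    rwa [if_pos (by omega), show i + (k - 1 - i) = k - 1 by omega]

theorem substr_append_substr (hik : i ≤ k) (hkj : k ≤ j) :
    substr S i k ++ substr S k j = substr S i j := by
  have hdrop : (S.take j).drop k = ((S.take j).drop i).drop (k - i) := by
    rw [List.drop_drop, Nat.add_sub_cancel' hik]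
  have htake : S.take k = (S.take j).take k := by rw [List.take_take, min_eq_left hkj]
  rw [substr, substr, substr, htake, List.drop_take, hdrop, List.take_append_drop]

theorem substr_eq_cons (hkj : k < j) (hk : S[k]? = some a) :
    substr S k j = a :: substr S (k + 1) j := by
  obtain ⟨hkS, rfl⟩ := List.getElem?_eq_some_iff.mp hk
  have hlen : k < (S.take j).length := by rw [List.length_take]; omega
  rw [substr, List.drop_eq_getElem_cons hlen, List.getElem_take]
  rfl

theorem substr_sublist_substr (hik : i ≤ k) : (substr S k j).Sublist (substr S i j) :=
  List.drop_sublist_drop_left _ hik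

end Substring

section NextMatch

variable {B : List α} {σ : α} {i j k : ℕ}

theorem nextmatch_le (hik : i < k) (hσ : B[k - 1]? = some σ) : nextmatch i σ B ≤ k := by
  have hkB : k - 1 < B.length := (List.getElem?_eq_some_iff.mp hσ).1
  exact sInf_le ⟨k, rfl, hik, by omega, hσ⟩

theorem nextmatch_spec (h : nextmatch i σ B = k) : i < k ∧ B[k - 1]? = some σ := by
  unfold nextmatch at h
  have hne : {x : ℕ∞ | ∃ k' : ℕ, x = k' ∧ i < k' ∧ k' ≤ B.length ∧ B[k' - 1]? = some σ}.Nonempty :=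
    Set.nonempty_iff_ne_empty.mpr fun he => by simp [he] at h
  obtain ⟨k', hk', hik, -, hσ⟩ := h ▸ csInf_mem hne
  obtain rfl : k = k' := by exact_mod_cast hk'
  exact ⟨hik, hσ⟩

theorem exists_nextmatch_eq_of_mem_substr (h : σ ∈ substr B i j) :
    ∃ k : ℕ, nextmatch i σ B = k ∧ k ≤ j := by
  obtain ⟨k', hik, hkj, hσ⟩ := mem_substr_iff.mp h
  have hle := nextmatch_le hik hσ
  obtain ⟨k, hk⟩ := ENat.ne_top_iff_exists.mp (ne_top_of_le_ne_top (ENat.natCast_ne_top k') hle)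
  rw [← hk, ENat.natCast_le_natCast] at hle
  exact ⟨k, hk.symm, hle.trans hkj⟩

theorem not_mem_substr_of_nextmatch_eq (h : nextmatch i σ B = k) : σ ∉ substr B i (k - 1) := by
  intro hσ
  obtain ⟨k', hik', hk'k, hσ'⟩ := mem_substr_iff.mp hσ
  have hle := h ▸ nextmatch_le hik' hσ'
  norm_cast at hle
  omega

theorem substr_eq_append_cons_of_nextmatch_eq (h : nextmatch i σ B = k) (hkj : k ≤ j) :
    substr B i j = substr B i (k - 1) ++ σ :: substr B k j := by
  obtain ⟨hik, hσ⟩ := nextmatch_spec h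
  rw [← substr_append_substr (by omega : i ≤ k - 1) (by omega : k - 1 ≤ j),
    substr_eq_cons (by omega) hσ, Nat.sub_add_cancel (by omega)]

theorem LCS_substr_cons_of_nextmatch_eq (A : List α) (h : nextmatch i σ B = k) (hkj : k ≤ j) :
    LCS (substr B i j) (σ :: A) = max (LCS (substr B i j) A) (LCS (substr B k j) A + 1) := by
  rw [substr_eq_append_cons_of_nextmatch_eq h hkj]
  exact LCS_append_cons_cons_right (not_mem_substr_of_nextmatch_eq h)

theorem LCS_substr_cons_eq_add_one_iff (A : List α) (h : nextmatch i σ B = k) (hkj : k ≤ j) :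
    LCS (substr B i j) (σ :: A) = LCS (substr B i j) A + 1 ↔
      LCS (substr B i j) A = LCS (substr B k j) A := by
  have hmax := LCS_substr_cons_of_nextmatch_eq A h hkj
  have hsuffix : LCS (substr B k j) A ≤ LCS (substr B i j) A :=
    LCS_mono (substr_sublist_substr (nextmatch_spec h).1.le) (List.Sublist.refl A)
  omega

end NextMatch

theorem Kmat_of_le {A B : List α} {i j : ℕ} (h : i ≤ j) : Kmat A B i j = LCS (substr B i j) A :=
  if_pos h

theorem Kmat_of_lt {A B : List α} {i j : ℕ} (h : j < i) : Kmat A B i j = (j : ℤ) - i :=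
  if_neg (Nat.not_le.mpr h)

theorem stmt_5_general {α : Type*} (A B : List α) (n : ℕ) (σ : α) :
    ∀ i j : ℕ, i ≤ j → j ≤ n →
      (Kmat (σ :: A) B i j = Kmat A B i j + 1 ↔
        ∃ k : ℕ, nextmatch i σ B = (k : ℕ∞) ∧ Kmat A B i j = Kmat A B k j) := by
  intro i j hij _
  rw [Kmat_of_le hij, Kmat_of_le hij]
  constructor
  · intro h
    have hσ : σ ∈ substr B i j := by
      by_contra hσ
      rw [LCS_cons_right_of_not_mem hσ] at h
      omega
    obtain ⟨k, hk, hkj⟩ := exists_nextmatch_eq_of_mem_substr hσ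
    refine ⟨k, hk, ?_⟩
    rw [Kmat_of_le hkj]
    exact_mod_cast (LCS_substr_cons_eq_add_one_iff A hk hkj).mp (by exact_mod_cast h)
  · rintro ⟨k, hk, heq⟩
    have hkj : k ≤ j := by
      by_contra hjk
      rw [Kmat_of_lt (by omega)] at heq
      omega
    rw [Kmat_of_le hkj] at heq
    exact_mod_cast (LCS_substr_cons_eq_add_one_iff A hk hkj).mpr (by exact_mod_cast heq)

/-- K'[i,j] = K[i,j] + 1 iff k = nextmatch(i,σ,B) < ∞ and K[i,j] = K[k,j]. -/
theorem stmt_5 {α : Type*} (A B : List α) (m n : ℕ)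
    (hA : A.length = m) (hB : B.length = n) (σ : α) :
    ∀ i j : ℕ, i ≤ j → j ≤ n →
      (Kmat (σ :: A) B i j = Kmat A B i j + 1 ↔
        ∃ k : ℕ, nextmatch i σ B = (k : ℕ∞) ∧ Kmat A B i j = Kmat A B k j) :=
  stmt_5_general A B n σ
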